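/- arXiv:2108.06485 — 4 statements merged into one kernel-verified Lean document; each statement's English description precedes it below -/
import Mathlib

section
/- Let H be a real inner product space with inner product (·,·), a(·,·) a symmetric positive semidefinite bilinear form on a subspace V_H = V1 ⊕ V2, and γ < 1 with (v1,v2) ≤ γ‖v1‖‖v2‖ for v1 ∈ V1, v2 ∈ V2. Fix ω ∈ [0,1], τ > 0, and suppose τ · sup{‖v‖_a²/‖v‖² : v ∈ V2, v ≠ 0} ≤ (1−γ²)/(2−ω). If sequences u1^k ∈ V1, u2^k ∈ V2 satisfy, for all v1 ∈ V1 and v2 ∈ V2: (u1^{k+1} − u1^k, v1) + (u2^k − u2^{k−1}, v1) + τ a(u1^{k+1} + u2^k, v1) = 0 and (u2^{k+1} − u2^k, v2) + (u1^k − u1^{k−1}, v2) + τ a((1−ω)u1^k + ω u1^{k+1} + u2^k, v2) = 0, then the quantity E^k := (γ²/2)(‖u1^{k+1} − u1^k‖² + ‖u2^{k+1} − u2^k‖²) + (τ/2)‖u1^{k+1} + u2^{k+1}‖_a² is nonincreasing in k. -/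
open RealInnerProductSpace


lemma bilin_id {V : Type*} [AddCommGroup V] [Module ℝ V]
    (a : V →ₗ[ℝ] V →ₗ[ℝ] ℝ) (hs : ∀ u v, a u v = a v u) (ω τ : ℝ) (p1 q1 p2 q2 : V) :
    τ * a (p1 + q2) (p1 - q1) + τ * a ((1 - ω) • q1 + ω • p1 + q2) (p2 - q2)
      = τ/2 * a (p1 + p2) (p1 + p2) - τ/2 * a (q1 + q2) (q1 + q2)
        + τ/2 * a (p1 - q1) (p1 - q1) - τ*(1-ω) * a (p1 - q1) (p2 - q2)
        - τ/2 * a (p2 - q2) (p2 - q2) := by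
  simp only [map_add, map_sub, map_smul, LinearMap.add_apply, LinearMap.sub_apply,
    LinearMap.smul_apply, smul_eq_mul]
  linear_combination (-τ/2) * hs p1 q1 + τ * hs q2 p1 + (τ/2) * hs q1 q2
    + (τ/2) * hs p1 p2 + (τ/2) * hs q2 p2

lemma key_ineq (γ ω τ N1 N2 M1 M2 c1 c2 a11 a12 a22 W1 W2 : ℝ)
    (hγ0 : 0 ≤ γ) (hγ1 : γ < 1) (hω0 : 0 ≤ ω) (hω1 : ω ≤ 1) (hτ : 0 < τ)
    (hid : N1^2 + N2^2 + c1 + c2 + τ/2*W2 - τ/2*W1 + τ/2*a11 - τ*(1-ω)*a12 - τ/2*a22 = 0)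
    (hc1 : -c1 ≤ γ * N1 * M2) (hc2 : -c2 ≤ γ * M1 * N2)
    (hacs : a12 ≤ (a11 + a22)/2) (ha11 : 0 ≤ a11)
    (hst : τ * a22 ≤ (1 - γ^2)/(2-ω) * N2^2) :
    γ^2/2*(N1^2 + N2^2) + τ/2*W2 ≤ γ^2/2*(M1^2 + M2^2) + τ/2*W1 := by
  have h2ω : (0:ℝ) < 2 - ω := by linarith
  have h1 : (2-ω) * (τ * a22) ≤ (1 - γ^2) * N2^2 := by
    have h := mul_le_mul_of_nonneg_left hst h2ω.le
    have he : (2-ω) * ((1 - γ^2)/(2-ω) * N2^2) = (1 - γ^2) * N2^2 := by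
      field_simp
    linarith [he ▸ h]
  have h2 : τ*(1-ω)*a12 ≤ τ*(1-ω)*((a11 + a22)/2) :=
    mul_le_mul_of_nonneg_left hacs (mul_nonneg hτ.le (by linarith))
  have h3 : 0 ≤ τ*ω*a11 := mul_nonneg (mul_nonneg hτ.le hω0) ha11
  have h4 : γ * N1 * M2 ≤ γ^2/2*M2^2 + N1^2/2 := by nlinarith [sq_nonneg (γ*M2 - N1)]
  have h5 : γ * M1 * N2 ≤ γ^2/2*M1^2 + N2^2/2 := by nlinarith [sq_nonneg (γ*M1 - N2)]
  have hγ2 : γ^2 ≤ 1 := by nlinarith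
  have h6 : γ^2*N1^2 ≤ N1^2 := by nlinarith [sq_nonneg N1]
  linarith [h1, h2, h3, h4, h5, h6, hid, hc1, hc2]

lemma bilin_cs {V : Type*} [AddCommGroup V] [Module ℝ V]
    (a : V →ₗ[ℝ] V →ₗ[ℝ] ℝ) (hs : ∀ u v, a u v = a v u) (hpsd : ∀ v, 0 ≤ a v v)
    (x y : V) : a x y ≤ (a x x + a y y)/2 := by
  have h := hpsd (x - y)
  simp only [map_sub, LinearMap.sub_apply] at h
  have := hs x y
  linarith


/-- Stability of the partially explicit splitting scheme (single-rate, time step τ):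
under the stability condition `τ · sup ‖v‖_a²/‖v‖² ≤ (1−γ²)/(2−ω)` on `V2`, the
energy `E^k = (γ²/2)(‖u1^{k+1}−u1^k‖² + ‖u2^{k+1}−u2^k‖²) + (τ/2)‖u1^{k+1}+u2^{k+1}‖_a²`
is nonincreasing in `k`. -/
theorem stmt5 {V : Type*} [NormedAddCommGroup V] [InnerProductSpace ℝ V]
    (V1 V2 : Submodule ℝ V)
    (a : V →ₗ[ℝ] V →ₗ[ℝ] ℝ) (hsymm : ∀ u v, a u v = a v u) (hpsd : ∀ v, 0 ≤ a v v)
    (γ : ℝ) (hγ0 : 0 ≤ γ) (hγ1 : γ < 1)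
    (hCS : ∀ v1 ∈ V1, ∀ v2 ∈ V2, ⟪v1, v2⟫ ≤ γ * ‖v1‖ * ‖v2‖)
    (ω τ : ℝ) (hω : ω ∈ Set.Icc (0 : ℝ) 1) (hτ : 0 < τ)
    (hstab : ∀ v ∈ V2, τ * a v v ≤ (1 - γ ^ 2) / (2 - ω) * ‖v‖ ^ 2)
    (u1 u2 : ℕ → V) (hu1 : ∀ k, u1 k ∈ V1) (hu2 : ∀ k, u2 k ∈ V2)
    (heq1 : ∀ k, ∀ v1 ∈ V1,
      ⟪u1 (k + 2) - u1 (k + 1), v1⟫ + ⟪u2 (k + 1) - u2 k, v1⟫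
        + τ * a (u1 (k + 2) + u2 (k + 1)) v1 = 0)
    (heq2 : ∀ k, ∀ v2 ∈ V2,
      ⟪u2 (k + 2) - u2 (k + 1), v2⟫ + ⟪u1 (k + 1) - u1 k, v2⟫
        + τ * a ((1 - ω) • u1 (k + 1) + ω • u1 (k + 2) + u2 (k + 1)) v2 = 0) :
    ∀ k, γ ^ 2 / 2 * (‖u1 (k + 2) - u1 (k + 1)‖ ^ 2 + ‖u2 (k + 2) - u2 (k + 1)‖ ^ 2)
          + τ / 2 * a (u1 (k + 2) + u2 (k + 2)) (u1 (k + 2) + u2 (k + 2))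
        ≤ γ ^ 2 / 2 * (‖u1 (k + 1) - u1 k‖ ^ 2 + ‖u2 (k + 1) - u2 k‖ ^ 2)
          + τ / 2 * a (u1 (k + 1) + u2 (k + 1)) (u1 (k + 1) + u2 (k + 1)) := by
  intro k
  have H1 := heq1 k (u1 (k+2) - u1 (k+1)) (sub_mem (hu1 (k+2)) (hu1 (k+1)))
  have H2 := heq2 k (u2 (k+2) - u2 (k+1)) (sub_mem (hu2 (k+2)) (hu2 (k+1)))
  have hb := bilin_id a hsymm ω τ (u1 (k+2)) (u1 (k+1)) (u2 (k+2)) (u2 (k+1))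
  have hn1 : ⟪u1 (k+2) - u1 (k+1), u1 (k+2) - u1 (k+1)⟫ = ‖u1 (k+2) - u1 (k+1)‖^2 :=
    real_inner_self_eq_norm_sq _
  have hn2 : ⟪u2 (k+2) - u2 (k+1), u2 (k+2) - u2 (k+1)⟫ = ‖u2 (k+2) - u2 (k+1)‖^2 :=
    real_inner_self_eq_norm_sq _
  have hid : ‖u1 (k+2) - u1 (k+1)‖^2 + ‖u2 (k+2) - u2 (k+1)‖^2
      + ⟪u2 (k+1) - u2 k, u1 (k+2) - u1 (k+1)⟫ + ⟪u1 (k+1) - u1 k, u2 (k+2) - u2 (k+1)⟫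
      + τ/2 * a (u1 (k+2) + u2 (k+2)) (u1 (k+2) + u2 (k+2))
      - τ/2 * a (u1 (k+1) + u2 (k+1)) (u1 (k+1) + u2 (k+1))
      + τ/2 * a (u1 (k+2) - u1 (k+1)) (u1 (k+2) - u1 (k+1))
      - τ*(1-ω) * a (u1 (k+2) - u1 (k+1)) (u2 (k+2) - u2 (k+1))
      - τ/2 * a (u2 (k+2) - u2 (k+1)) (u2 (k+2) - u2 (k+1)) = 0 := by
    linarith [H1, H2, hb, hn1, hn2]
  -- Cauchy–Schwarz cross terms
  have hc1 : -⟪u2 (k+1) - u2 k, u1 (k+2) - u1 (k+1)⟫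
      ≤ γ * ‖u1 (k+2) - u1 (k+1)‖ * ‖u2 (k+1) - u2 k‖ := by
    have h := hCS (u1 (k+1) - u1 (k+2)) (sub_mem (hu1 (k+1)) (hu1 (k+2)))
      (u2 (k+1) - u2 k) (sub_mem (hu2 (k+1)) (hu2 k))
    rw [show u1 (k+1) - u1 (k+2) = -(u1 (k+2) - u1 (k+1)) from (neg_sub _ _).symm,
      inner_neg_left, norm_neg, real_inner_comm] at h
    linarith
  have hc2 : -⟪u1 (k+1) - u1 k, u2 (k+2) - u2 (k+1)⟫
      ≤ γ * ‖u1 (k+1) - u1 k‖ * ‖u2 (k+2) - u2 (k+1)‖ := by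
    have h := hCS (u1 (k+1) - u1 k) (sub_mem (hu1 (k+1)) (hu1 k))
      (u2 (k+1) - u2 (k+2)) (sub_mem (hu2 (k+1)) (hu2 (k+2)))
    rw [show u2 (k+1) - u2 (k+2) = -(u2 (k+2) - u2 (k+1)) from (neg_sub _ _).symm,
      inner_neg_right, norm_neg] at h
    linarith
  -- Cauchy–Schwarz for the bilinear form a
  have hacs := bilin_cs a hsymm hpsd (u1 (k+2) - u1 (k+1)) (u2 (k+2) - u2 (k+1))
  have hst := hstab (u2 (k+2) - u2 (k+1)) (sub_mem (hu2 (k+2)) (hu2 (k+1)))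
  exact key_ineq γ ω τ (‖u1 (k+2) - u1 (k+1)‖) (‖u2 (k+2) - u2 (k+1)‖)
    (‖u1 (k+1) - u1 k‖) (‖u2 (k+1) - u2 k‖)
    (⟪u2 (k+1) - u2 k, u1 (k+2) - u1 (k+1)⟫) (⟪u1 (k+1) - u1 k, u2 (k+2) - u2 (k+1)⟫)
    _ _ _ _ _ hγ0 hγ1 hω.1 hω.2 hτ hid hc1 hc2 hacs (hpsd _) hst
end

section
/- (Stability of coarse-fine multirate scheme.) Let V1, V2 be subspaces of a real inner product space with strengthened Cauchy–Schwarz constant γ < 1, a(·,·) a symmetric positive semidefinite bilinear form, ω ∈ [0,1], m ≥ 1 an integer, ΔT > 0, Δt = ΔT/m. Suppose ΔT · sup{‖v‖_a²/‖v‖² : v ∈ V2, v ≠ 0} ≤ (1−γ²)m/(m+1−mω). If u1^{n_k} ∈ V1 (defined at coarse steps n_k = km) and u2^n ∈ V2 (defined at all fine steps) satisfy, for all v1 ∈ V1, v2 ∈ V2: (u1^{n_{k+1}} − u1^{n_k} + u2^{n_k} − u2^{n_{k−1}}, v1) = −ΔT a(u1^{n_{k+1}} + u2^{n_k}, v1),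 and for each n with n_k ≤ n < n_{k+1}: (m(u2^{n+1} − u2^n) + u1^{n_k} − u1^{n_{k−1}}, v2) = −ΔT a((1−ω)u1^{n_k} + ω u1^{n_{k+1}} + u2^n, v2), then (γ²ΔT/2)Σ_{j=1,2}‖(u_j^{n_{k+1}} − u_j^{n_k})/ΔT‖² + (1/2)‖u1^{n_{k+1}} + u2^{n_{k+1}}‖_a² ≤ (γ²ΔT/2)Σ_{j=1,2}‖(u_j^{n_k} − u_j^{n_{k−1}})/ΔT‖² + (1/2)‖u1^{n_k} + u2^{n_k}‖_a². -/
open RealInnerProductSpace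

set_option maxHeartbeats 2000000 in
/-- Lemma 1 (stability of the coarse-fine multirate scheme): coarse time step for the
implicit `V1`-equation, fine time step `Δt = ΔT/m` for the explicit `V2`-equation.
Here `u1km1, u1k, u1kp1` are the `V1`-components at the coarse steps
`n_{k-1}, n_k, n_{k+1}`, `u2m1` is the `V2`-component at `n_{k-1}`, and `u2 n`
(for `0 ≤ n ≤ m`) are the `V2`-components at the fine steps of `(T_k, T_{k+1}]`. -/
theorem stmt6 {V : Type*} [NormedAddCommGroup V] [InnerProductSpace ℝ V]
    (V1 V2 : Submodule ℝ V)
    (a : V →ₗ[ℝ] V →ₗ[ℝ] ℝ) (hsymm : ∀ u v, a u v = a v u) (hpsd : ∀ v, 0 ≤ a v v)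
    (γ : ℝ) (hγ0 : 0 ≤ γ) (hγ1 : γ < 1)
    (hCS : ∀ v1 ∈ V1, ∀ v2 ∈ V2, ⟪v1, v2⟫ ≤ γ * ‖v1‖ * ‖v2‖)
    (ω : ℝ) (hω : ω ∈ Set.Icc (0 : ℝ) 1) (m : ℕ) (hm : 1 ≤ m)
    (ΔT : ℝ) (hΔT : 0 < ΔT)
    (hstab : ∀ v ∈ V2,
      ΔT * a v v ≤ (1 - γ ^ 2) * (m : ℝ) / ((m : ℝ) + 1 - (m : ℝ) * ω) * ‖v‖ ^ 2)
    (u1km1 u1k u1kp1 : V) (h1a : u1km1 ∈ V1) (h1b : u1k ∈ V1) (h1c : u1kp1 ∈ V1)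
    (u2m1 : V) (h2m1 : u2m1 ∈ V2) (u2 : ℕ → V) (hu2 : ∀ n, u2 n ∈ V2)
    (heq1 : ∀ v1 ∈ V1,
      ⟪(u1kp1 - u1k) + (u2 0 - u2m1), v1⟫ = -ΔT * a (u1kp1 + u2 0) v1)
    (heq2 : ∀ n < m, ∀ v2 ∈ V2,
      ⟪(m : ℝ) • (u2 (n + 1) - u2 n) + (u1k - u1km1), v2⟫
        = -ΔT * a ((1 - ω) • u1k + ω • u1kp1 + u2 n) v2) :
    γ ^ 2 * ΔT / 2 * (‖ΔT⁻¹ • (u1kp1 - u1k)‖ ^ 2 + ‖ΔT⁻¹ • (u2 m - u2 0)‖ ^ 2)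
        + 1 / 2 * a (u1kp1 + u2 m) (u1kp1 + u2 m)
      ≤ γ ^ 2 * ΔT / 2 * (‖ΔT⁻¹ • (u1k - u1km1)‖ ^ 2 + ‖ΔT⁻¹ • (u2 0 - u2m1)‖ ^ 2)
        + 1 / 2 * a (u1k + u2 0) (u1k + u2 0) := by
  obtain ⟨hω0, hω1⟩ := hω
  have hM1 : (1 : ℝ) ≤ (m : ℝ) := by exact_mod_cast hm
  have hM0 : (0 : ℝ) ≤ (m : ℝ) := by linarith
  have hγ2 : γ ^ 2 ≤ 1 := by nlinarith
  have hD1m : u1kp1 - u1k ∈ V1 := Submodule.sub_mem _ h1c h1b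
  have hd1m : u1k - u1km1 ∈ V1 := Submodule.sub_mem _ h1b h1a
  have hd2m : u2 0 - u2m1 ∈ V2 := Submodule.sub_mem _ (hu2 0) h2m1
  have hD2m : u2 m - u2 0 ∈ V2 := Submodule.sub_mem _ (hu2 m) (hu2 0)
  have hEm : ∀ n : ℕ, u2 (n + 1) - u2 n ∈ V2 := fun n => Submodule.sub_mem _ (hu2 (n + 1)) (hu2 n)
  have hden : (0 : ℝ) < (m : ℝ) + 1 - (m : ℝ) * ω := by nlinarith
  have hC0 : (0 : ℝ) ≤ (1 - γ ^ 2) * (m : ℝ) / ((m : ℝ) + 1 - (m : ℝ) * ω) := by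
    apply div_nonneg _ hden.le
    nlinarith
  -- step equation at the coarse level, tested with D1
  have I1 : ‖u1kp1 - u1k‖ ^ 2 + ⟪u2 0 - u2m1, u1kp1 - u1k⟫
      = -ΔT * a (u1kp1 + u2 0) (u1kp1 - u1k) := by
    have h := heq1 (u1kp1 - u1k) hD1m
    rwa [inner_add_left, real_inner_self_eq_norm_sq] at h
  -- fine-level equations, tested with the increments, summed
  have key2 : ∀ n ∈ Finset.range m,
      (m : ℝ) * ‖u2 (n + 1) - u2 n‖ ^ 2 + ⟪u1k - u1km1, u2 (n + 1) - u2 n⟫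
        = -ΔT * (a ((1 - ω) • u1k + ω • u1kp1) (u2 (n + 1) - u2 n)
            + (1 / 2 * a (u2 (n + 1)) (u2 (n + 1)) - 1 / 2 * a (u2 n) (u2 n)
              - 1 / 2 * a (u2 (n + 1) - u2 n) (u2 (n + 1) - u2 n))) := by
    intro n hn
    rw [Finset.mem_range] at hn
    have h := heq2 n hn (u2 (n + 1) - u2 n) (hEm n)
    rw [inner_add_left, real_inner_smul_left, real_inner_self_eq_norm_sq] at h
    have hexp : a ((1 - ω) • u1k + ω • u1kp1 + u2 n) (u2 (n + 1) - u2 n)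
        = a ((1 - ω) • u1k + ω • u1kp1) (u2 (n + 1) - u2 n)
          + (1 / 2 * a (u2 (n + 1)) (u2 (n + 1)) - 1 / 2 * a (u2 n) (u2 n)
            - 1 / 2 * a (u2 (n + 1) - u2 n) (u2 (n + 1) - u2 n)) := by
      simp only [map_add, map_sub, LinearMap.add_apply, LinearMap.sub_apply]
      linarith [hsymm (u2 n) (u2 (n + 1))]
    rw [hexp] at h
    exact h
  have hsumL : ∑ n ∈ Finset.range m,
      ((m : ℝ) * ‖u2 (n + 1) - u2 n‖ ^ 2 + ⟪u1k - u1km1, u2 (n + 1) - u2 n⟫)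
      = (m : ℝ) * ∑ n ∈ Finset.range m, ‖u2 (n + 1) - u2 n‖ ^ 2
        + ⟪u1k - u1km1, u2 m - u2 0⟫ := by
    rw [Finset.sum_add_distrib, ← Finset.mul_sum, ← inner_sum,
      Finset.sum_range_sub (fun n => u2 n)]
  have hsumR : ∑ n ∈ Finset.range m,
      (-ΔT * (a ((1 - ω) • u1k + ω • u1kp1) (u2 (n + 1) - u2 n)
        + (1 / 2 * a (u2 (n + 1)) (u2 (n + 1)) - 1 / 2 * a (u2 n) (u2 n)
          - 1 / 2 * a (u2 (n + 1) - u2 n) (u2 (n + 1) - u2 n))))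
      = -ΔT * (a ((1 - ω) • u1k + ω • u1kp1) (u2 m - u2 0)
        + (1 / 2 * a (u2 m) (u2 m) - 1 / 2 * a (u2 0) (u2 0)
          - 1 / 2 * ∑ n ∈ Finset.range m, a (u2 (n + 1) - u2 n) (u2 (n + 1) - u2 n))) := by
    rw [← Finset.mul_sum]
    congr 1
    have e1 : ∑ n ∈ Finset.range m, a ((1 - ω) • u1k + ω • u1kp1) (u2 (n + 1) - u2 n)
        = a ((1 - ω) • u1k + ω • u1kp1) (u2 m - u2 0) := by
      rw [← map_sum, Finset.sum_range_sub (fun n => u2 n)]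
    have e2 : ∑ n ∈ Finset.range m,
        (1 / 2 * a (u2 (n + 1)) (u2 (n + 1)) - 1 / 2 * a (u2 n) (u2 n))
        = 1 / 2 * a (u2 m) (u2 m) - 1 / 2 * a (u2 0) (u2 0) :=
      Finset.sum_range_sub (fun n => 1 / 2 * a (u2 n) (u2 n)) m
    rw [Finset.sum_add_distrib, Finset.sum_sub_distrib, e1, e2, ← Finset.mul_sum]
  have I2 : (m : ℝ) * ∑ n ∈ Finset.range m, ‖u2 (n + 1) - u2 n‖ ^ 2
        + ⟪u1k - u1km1, u2 m - u2 0⟫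
      = -ΔT * (a ((1 - ω) • u1k + ω • u1kp1) (u2 m - u2 0)
        + (1 / 2 * a (u2 m) (u2 m) - 1 / 2 * a (u2 0) (u2 0)
          - 1 / 2 * ∑ n ∈ Finset.range m, a (u2 (n + 1) - u2 n) (u2 (n + 1) - u2 n))) := by
    rw [← hsumL, Finset.sum_congr rfl key2, hsumR]
  -- bilinear algebra identity
  have hid : a (u1kp1 + u2 0) (u1kp1 - u1k)
        + a ((1 - ω) • u1k + ω • u1kp1) (u2 m - u2 0)
        + (1 / 2 * a (u2 m) (u2 m) - 1 / 2 * a (u2 0) (u2 0))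
      = 1 / 2 * a (u1kp1 + u2 m) (u1kp1 + u2 m) - 1 / 2 * a (u1k + u2 0) (u1k + u2 0)
        + 1 / 2 * a (u1kp1 - u1k) (u1kp1 - u1k)
        - (1 - ω) * a (u1kp1 - u1k) (u2 m - u2 0) := by
    have hw : ∀ x y : V, ω * a x y = ω * a y x := fun x y => by rw [hsymm x y]
    simp only [map_add, map_sub, map_smul, LinearMap.add_apply, LinearMap.sub_apply,
      LinearMap.smul_apply, smul_eq_mul]
    linarith [hsymm u1k u1kp1, hsymm u1k (u2 0), hsymm u1k (u2 m), hsymm u1kp1 (u2 0),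
      hsymm u1kp1 (u2 m), hsymm (u2 0) (u2 m), hw u1k u1kp1, hw u1k (u2 0), hw u1k (u2 m),
      hw u1kp1 (u2 0), hw u1kp1 (u2 m), hw (u2 0) (u2 m)]
  -- master energy identity
  have master : ‖u1kp1 - u1k‖ ^ 2 + ⟪u2 0 - u2m1, u1kp1 - u1k⟫
        + ((m : ℝ) * ∑ n ∈ Finset.range m, ‖u2 (n + 1) - u2 n‖ ^ 2
          + ⟪u1k - u1km1, u2 m - u2 0⟫)
      = -ΔT * (1 / 2 * a (u1kp1 + u2 m) (u1kp1 + u2 m)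
          - 1 / 2 * a (u1k + u2 0) (u1k + u2 0)
          + 1 / 2 * a (u1kp1 - u1k) (u1kp1 - u1k)
          - (1 - ω) * a (u1kp1 - u1k) (u2 m - u2 0)
          - 1 / 2 * ∑ n ∈ Finset.range m, a (u2 (n + 1) - u2 n) (u2 (n + 1) - u2 n)) := by
    linear_combination I1 + I2 - ΔT * hid
  -- strengthened Cauchy-Schwarz estimates
  have hP2 : -(1 / 2 * ‖u1kp1 - u1k‖ ^ 2) - γ ^ 2 / 2 * ‖u2 0 - u2m1‖ ^ 2
      ≤ ⟪u2 0 - u2m1, u1kp1 - u1k⟫ := by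
    have h := hCS (-(u1kp1 - u1k)) (Submodule.neg_mem _ hD1m) (u2 0 - u2m1) hd2m
    rw [inner_neg_left, norm_neg, real_inner_comm] at h
    nlinarith [sq_nonneg (‖u1kp1 - u1k‖ - γ * ‖u2 0 - u2m1‖)]
  have hP1 : -(1 / 2 * ‖u2 m - u2 0‖ ^ 2) - γ ^ 2 / 2 * ‖u1k - u1km1‖ ^ 2
      ≤ ⟪u1k - u1km1, u2 m - u2 0⟫ := by
    have h := hCS (-(u1k - u1km1)) (Submodule.neg_mem _ hd1m) (u2 m - u2 0) hD2m
    rw [inner_neg_left, norm_neg] at h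
    nlinarith [sq_nonneg (‖u2 m - u2 0‖ - γ * ‖u1k - u1km1‖)]
  -- discrete Cauchy-Schwarz for the fine increments
  have hS0 : (0 : ℝ) ≤ ∑ n ∈ Finset.range m, ‖u2 (n + 1) - u2 n‖ ^ 2 :=
    Finset.sum_nonneg fun n _ => sq_nonneg _
  have hX2S : ‖u2 m - u2 0‖ ^ 2
      ≤ (m : ℝ) * ∑ n ∈ Finset.range m, ‖u2 (n + 1) - u2 n‖ ^ 2 := by
    have h1 : ‖u2 m - u2 0‖ ≤ ∑ n ∈ Finset.range m, ‖u2 (n + 1) - u2 n‖ := by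
      rw [← Finset.sum_range_sub (fun n => u2 n)]
      exact norm_sum_le _ _
    have h2 : (∑ n ∈ Finset.range m, ‖u2 (n + 1) - u2 n‖) ^ 2
        ≤ (m : ℝ) * ∑ n ∈ Finset.range m, ‖u2 (n + 1) - u2 n‖ ^ 2 := by
      have := sq_sum_le_card_mul_sum_sq (s := Finset.range m)
        (f := fun n => ‖u2 (n + 1) - u2 n‖)
      simpa [Finset.card_range] using this
    calc ‖u2 m - u2 0‖ ^ 2 ≤ (∑ n ∈ Finset.range m, ‖u2 (n + 1) - u2 n‖) ^ 2 :=
          pow_le_pow_left₀ (norm_nonneg _) h1 2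
      _ ≤ _ := h2
  -- stability estimates
  have hAE : ΔT * ∑ n ∈ Finset.range m, a (u2 (n + 1) - u2 n) (u2 (n + 1) - u2 n)
      ≤ (1 - γ ^ 2) * (m : ℝ) / ((m : ℝ) + 1 - (m : ℝ) * ω)
        * ∑ n ∈ Finset.range m, ‖u2 (n + 1) - u2 n‖ ^ 2 := by
    rw [Finset.mul_sum, Finset.mul_sum]
    exact Finset.sum_le_sum fun n _ => hstab _ (hEm n)
  have hstabD2 : ΔT * a (u2 m - u2 0) (u2 m - u2 0)
      ≤ (1 - γ ^ 2) * (m : ℝ) / ((m : ℝ) + 1 - (m : ℝ) * ω) * ‖u2 m - u2 0‖ ^ 2 :=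
    hstab _ hD2m
  have hA22chain : ΔT * a (u2 m - u2 0) (u2 m - u2 0)
      ≤ (1 - γ ^ 2) * (m : ℝ) / ((m : ℝ) + 1 - (m : ℝ) * ω)
        * ((m : ℝ) * ∑ n ∈ Finset.range m, ‖u2 (n + 1) - u2 n‖ ^ 2) :=
    hstabD2.trans (mul_le_mul_of_nonneg_left hX2S hC0)
  have h5 : (1 - ω) ^ 2 * (ΔT * a (u2 m - u2 0) (u2 m - u2 0))
      ≤ (1 - ω) ^ 2 * ((1 - γ ^ 2) * (m : ℝ) / ((m : ℝ) + 1 - (m : ℝ) * ω)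
        * ((m : ℝ) * ∑ n ∈ Finset.range m, ‖u2 (n + 1) - u2 n‖ ^ 2)) :=
    mul_le_mul_of_nonneg_left hA22chain (sq_nonneg _)
  -- key coefficient inequality
  have hCkey : (1 - γ ^ 2) * (m : ℝ) / ((m : ℝ) + 1 - (m : ℝ) * ω)
      * ((1 - ω) ^ 2 * (m : ℝ) + 1) ≤ (m : ℝ) * (1 - γ ^ 2) := by
    rw [div_mul_eq_mul_div, div_le_iff₀ hden]
    have h1 : (1 - ω) ^ 2 * (m : ℝ) + 1 ≤ (m : ℝ) + 1 - (m : ℝ) * ω := by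
      nlinarith [mul_nonneg (mul_nonneg hM0 (sub_nonneg.2 hω1)) hω0]
    nlinarith [mul_le_mul_of_nonneg_left h1 (show (0 : ℝ) ≤ (1 - γ ^ 2) * (m : ℝ) by nlinarith)]
  have h6 : (∑ n ∈ Finset.range m, ‖u2 (n + 1) - u2 n‖ ^ 2)
        * ((1 - γ ^ 2) * (m : ℝ) / ((m : ℝ) + 1 - (m : ℝ) * ω)
          * ((1 - ω) ^ 2 * (m : ℝ) + 1))
      ≤ (∑ n ∈ Finset.range m, ‖u2 (n + 1) - u2 n‖ ^ 2) * ((m : ℝ) * (1 - γ ^ 2)) :=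
    mul_le_mul_of_nonneg_left hCkey hS0
  -- Young inequality in the a-seminorm
  have hYoung : 2 * (1 - ω) * a (u1kp1 - u1k) (u2 m - u2 0)
      ≤ a (u1kp1 - u1k) (u1kp1 - u1k) + (1 - ω) ^ 2 * a (u2 m - u2 0) (u2 m - u2 0) := by
    have hw : ∀ x y : V, ω * a x y = ω * a y x := fun x y => by rw [hsymm x y]
    have hw2 : ∀ x y : V, ω ^ 2 * a x y = ω ^ 2 * a y x := fun x y => by rw [hsymm x y]
    have h0 := hpsd ((u1kp1 - u1k) - (1 - ω) • (u2 m - u2 0))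
    simp only [map_sub, map_smul, LinearMap.sub_apply, LinearMap.smul_apply,
      smul_eq_mul] at h0 ⊢
    linarith [h0, hsymm u1k u1kp1, hsymm u1k (u2 0), hsymm u1k (u2 m), hsymm u1kp1 (u2 0),
      hsymm u1kp1 (u2 m), hsymm (u2 0) (u2 m), hw u1k u1kp1, hw u1k (u2 0), hw u1k (u2 m),
      hw u1kp1 (u2 0), hw u1kp1 (u2 m), hw (u2 0) (u2 m), hw2 u1k u1kp1, hw2 u1k (u2 0),
      hw2 u1k (u2 m), hw2 u1kp1 (u2 0), hw2 u1kp1 (u2 m), hw2 (u2 0) (u2 m)]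
  have hYΔ : ΔT * (2 * (1 - ω) * a (u1kp1 - u1k) (u2 m - u2 0))
      ≤ ΔT * (a (u1kp1 - u1k) (u1kp1 - u1k)
        + (1 - ω) ^ 2 * a (u2 m - u2 0) (u2 m - u2 0)) :=
    mul_le_mul_of_nonneg_left hYoung hΔT.le
  have h7 : γ ^ 2 * ‖u1kp1 - u1k‖ ^ 2 ≤ 1 * ‖u1kp1 - u1k‖ ^ 2 :=
    mul_le_mul_of_nonneg_right hγ2 (sq_nonneg _)
  have h8 : γ ^ 2 * ‖u2 m - u2 0‖ ^ 2
      ≤ γ ^ 2 * ((m : ℝ) * ∑ n ∈ Finset.range m, ‖u2 (n + 1) - u2 n‖ ^ 2) :=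
    mul_le_mul_of_nonneg_left hX2S (sq_nonneg γ)
  -- the scaled inequality
  have hfinal : γ ^ 2 / 2 * (‖u1kp1 - u1k‖ ^ 2 + ‖u2 m - u2 0‖ ^ 2)
        + ΔT * (1 / 2 * a (u1kp1 + u2 m) (u1kp1 + u2 m))
      ≤ γ ^ 2 / 2 * (‖u1k - u1km1‖ ^ 2 + ‖u2 0 - u2m1‖ ^ 2)
        + ΔT * (1 / 2 * a (u1k + u2 0) (u1k + u2 0)) := by
    nlinarith [master, hP1, hP2, hX2S, hAE, h5, h6, hYΔ, h7, h8]
  -- rescale to obtain the stated inequality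
  have hn1 : ‖ΔT⁻¹ • (u1kp1 - u1k)‖ ^ 2 = ΔT⁻¹ ^ 2 * ‖u1kp1 - u1k‖ ^ 2 := by
    rw [norm_smul, Real.norm_eq_abs, abs_of_pos (inv_pos.2 hΔT)]; ring
  have hn2 : ‖ΔT⁻¹ • (u2 m - u2 0)‖ ^ 2 = ΔT⁻¹ ^ 2 * ‖u2 m - u2 0‖ ^ 2 := by
    rw [norm_smul, Real.norm_eq_abs, abs_of_pos (inv_pos.2 hΔT)]; ring
  have hn3 : ‖ΔT⁻¹ • (u1k - u1km1)‖ ^ 2 = ΔT⁻¹ ^ 2 * ‖u1k - u1km1‖ ^ 2 := by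
    rw [norm_smul, Real.norm_eq_abs, abs_of_pos (inv_pos.2 hΔT)]; ring
  have hn4 : ‖ΔT⁻¹ • (u2 0 - u2m1)‖ ^ 2 = ΔT⁻¹ ^ 2 * ‖u2 0 - u2m1‖ ^ 2 := by
    rw [norm_smul, Real.norm_eq_abs, abs_of_pos (inv_pos.2 hΔT)]; ring
  rw [hn1, hn2, hn3, hn4]
  have hne : ΔT ≠ 0 := hΔT.ne'
  have e1 : γ ^ 2 * ΔT / 2 * (ΔT⁻¹ ^ 2 * ‖u1kp1 - u1k‖ ^ 2 + ΔT⁻¹ ^ 2 * ‖u2 m - u2 0‖ ^ 2)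
        + 1 / 2 * a (u1kp1 + u2 m) (u1kp1 + u2 m)
      = ΔT⁻¹ * (γ ^ 2 / 2 * (‖u1kp1 - u1k‖ ^ 2 + ‖u2 m - u2 0‖ ^ 2)
        + ΔT * (1 / 2 * a (u1kp1 + u2 m) (u1kp1 + u2 m))) := by
    field_simp
  have e2 : γ ^ 2 * ΔT / 2 * (ΔT⁻¹ ^ 2 * ‖u1k - u1km1‖ ^ 2 + ΔT⁻¹ ^ 2 * ‖u2 0 - u2m1‖ ^ 2)
        + 1 / 2 * a (u1k + u2 0) (u1k + u2 0)
      = ΔT⁻¹ * (γ ^ 2 / 2 * (‖u1k - u1km1‖ ^ 2 + ‖u2 0 - u2m1‖ ^ 2)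
        + ΔT * (1 / 2 * a (u1k + u2 0) (u1k + u2 0))) := by
    field_simp
  rw [e1, e2]
  exact mul_le_mul_of_nonneg_left hfinal (inv_nonneg.2 hΔT.le)
end

section
/- (Stability of fine-coarse multirate scheme.) With the same setting of subspaces V1, V2, constant γ < 1, bilinear form a, ω ∈ [0,1], integer m ≥ 1 and ΔT > 0, suppose ΔT · sup{‖v‖_a²/‖v‖² : v ∈ V2, v ≠ 0} ≤ (1−γ²)/(m−mω+1). If u1^n ∈ V1 (fine steps) and u2^{n_k} ∈ V2 (coarse steps) satisfy, for each n_k ≤ n < n_{k+1} and all v1 ∈ V1: (m(u1^{n+1} − u1^n) + u2^{n_k} − u2^{n_{k−1}}, v1) = −ΔT a(u1^{n+1} + u2^{n_k}, v1), and for all v2 ∈ V2: (u2^{n_{k+1}} − u2^{n_k} + u1^{n_k} − u1^{n_{k−1}}, v2) = −ΔT a((1−ω)u1^{n_k} + ω u1^{n_{k+1}} + u2^{n_k}, v2), then (γ²ΔT/2)Σ_{j=1,2}‖(u_j^{n_{k+1}} − u_j^{n_k})/ΔT‖² + (1/2)‖u1^{n_{k+1}} + u2^{n_{k+1}}‖_a²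 ≤ (γ²ΔT/2)Σ_{j=1,2}‖(u_j^{n_k} − u_j^{n_{k−1}})/ΔT‖² + (1/2)‖u1^{n_k} + u2^{n_k}‖_a². -/
open RealInnerProductSpace Finset

/-- Discrete Cauchy–Schwarz for a symmetric psd bilinear form. -/
lemma aux_sumCS {V : Type*} [AddCommGroup V] [Module ℝ V]
    (a : V →ₗ[ℝ] V →ₗ[ℝ] ℝ) (hsymm : ∀ u v, a u v = a v u) (hpsd : ∀ v, 0 ≤ a v v)
    (d : ℕ → V) : ∀ N : ℕ,
    a (∑ n ∈ range N, d n) (∑ n ∈ range N, d n) ≤ N * ∑ n ∈ range N, a (d n) (d n) := by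
  intro N
  induction N with
  | zero => simp
  | succ N ih =>
    set S := ∑ n ∈ range N, d n with hS
    rw [Finset.sum_range_succ, Finset.sum_range_succ]
    have hexp : a (S + d N) (S + d N)
        = a S S + 2 * a S (d N) + a (d N) (d N) := by
      simp [map_add, LinearMap.add_apply, hsymm (d N) S]; ring
    rcases Nat.eq_zero_or_pos N with h0 | hpos
    · subst h0
      simp only [range_zero, Finset.sum_empty, zero_add, Nat.cast_one, map_zero,
        LinearMap.zero_apply] at hexp ⊢
      nlinarith [hpsd (d 0), hexp]
    · have hN : (0:ℝ) < N := by exact_mod_cast hpos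
      have hyoung : 0 ≤ a (S - (N:ℝ) • d N) (S - (N:ℝ) • d N) := hpsd _
      have hyoung' : a (S - (N:ℝ) • d N) (S - (N:ℝ) • d N)
          = a S S - 2 * (N:ℝ) * a S (d N) + (N:ℝ)^2 * a (d N) (d N) := by
        simp [map_sub, map_smul, LinearMap.sub_apply, LinearMap.smul_apply,
          smul_eq_mul, hsymm (d N) S]; ring
      rw [hyoung'] at hyoung
      have key : (N:ℝ) * (a (S + d N) (S + d N))
          ≤ (N:ℝ) * (((N:ℝ)+1) * (∑ n ∈ range N, a (d n) (d n) + a (d N) (d N))) := by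
        nlinarith [hpsd (d N), hpsd S, ih]
      have := le_of_mul_le_mul_left key hN
      push_cast
      linarith [this]

lemma aux_cross (g x y I : ℝ) (h : -(g * x * y) ≤ I) : -(g^2*y^2 + x^2) ≤ 2*I := by
  nlinarith [sq_nonneg (g*y - x)]

set_option maxHeartbeats 1000000

/-- Lemma 2 (stability of the fine-coarse multirate scheme): fine time step for the
implicit `V1`-equation, coarse time step for the explicit `V2`-equation.
Here `u1 n` (for `0 ≤ n ≤ m`) are the `V1`-components at the fine steps of
`(T_k, T_{k+1}]`, `u1m1` is the `V1`-component at `n_{k-1}`, and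
`u2km1, u2k, u2kp1` are the `V2`-components at the coarse steps. -/
theorem stmt7 {V : Type*} [NormedAddCommGroup V] [InnerProductSpace ℝ V]
    (V1 V2 : Submodule ℝ V)
    (a : V →ₗ[ℝ] V →ₗ[ℝ] ℝ) (hsymm : ∀ u v, a u v = a v u) (hpsd : ∀ v, 0 ≤ a v v)
    (γ : ℝ) (hγ0 : 0 ≤ γ) (hγ1 : γ < 1)
    (hCS : ∀ v1 ∈ V1, ∀ v2 ∈ V2, ⟪v1, v2⟫ ≤ γ * ‖v1‖ * ‖v2‖)
    (ω : ℝ) (hω : ω ∈ Set.Icc (0 : ℝ) 1) (m : ℕ) (hm : 1 ≤ m)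
    (ΔT : ℝ) (hΔT : 0 < ΔT)
    (hstab : ∀ v ∈ V2,
      ΔT * a v v ≤ (1 - γ ^ 2) / ((m : ℝ) - (m : ℝ) * ω + 1) * ‖v‖ ^ 2)
    (u1m1 : V) (h1m1 : u1m1 ∈ V1) (u1 : ℕ → V) (hu1 : ∀ n, u1 n ∈ V1)
    (u2km1 u2k u2kp1 : V) (h2a : u2km1 ∈ V2) (h2b : u2k ∈ V2) (h2c : u2kp1 ∈ V2)
    (heq1 : ∀ n < m, ∀ v1 ∈ V1,
      ⟪(m : ℝ) • (u1 (n + 1) - u1 n) + (u2k - u2km1), v1⟫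
        = -ΔT * a (u1 (n + 1) + u2k) v1)
    (heq2 : ∀ v2 ∈ V2,
      ⟪(u2kp1 - u2k) + (u1 0 - u1m1), v2⟫
        = -ΔT * a ((1 - ω) • u1 0 + ω • u1 m + u2k) v2) :
    γ ^ 2 * ΔT / 2 * (‖ΔT⁻¹ • (u1 m - u1 0)‖ ^ 2 + ‖ΔT⁻¹ • (u2kp1 - u2k)‖ ^ 2)
        + 1 / 2 * a (u1 m + u2kp1) (u1 m + u2kp1)
      ≤ γ ^ 2 * ΔT / 2 * (‖ΔT⁻¹ • (u1 0 - u1m1)‖ ^ 2 + ‖ΔT⁻¹ • (u2k - u2km1)‖ ^ 2)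
        + 1 / 2 * a (u1 0 + u2k) (u1 0 + u2k) := by
  have hM0 : (0:ℝ) ≤ (m:ℝ) := Nat.cast_nonneg m
  have hM1 : (1:ℝ) ≤ (m:ℝ) := by exact_mod_cast hm
  have hMpos : (0:ℝ) < (m:ℝ) := by linarith
  obtain ⟨hω0, hω1⟩ := hω
  -- pointwise fine-step energy identity
  have key1 : ∀ n ∈ Finset.range m,
      (m:ℝ) * ‖u1 (n+1) - u1 n‖^2 + ⟪u2k - u2km1, u1 (n+1) - u1 n⟫
        = -ΔT/2 * ((a (u1 (n+1) + u2k) (u1 (n+1) + u2k) - a (u1 n + u2k) (u1 n + u2k))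
            + a (u1 (n+1) - u1 n) (u1 (n+1) - u1 n)) := by
    intro n hn
    have e1 := heq1 n (Finset.mem_range.mp hn) _ (sub_mem (hu1 (n+1)) (hu1 n))
    rw [inner_add_left, real_inner_smul_left, real_inner_self_eq_norm_sq] at e1
    have ha : a (u1 (n+1) + u2k) (u1 (n+1) - u1 n) * 2
        = (a (u1 (n+1) + u2k) (u1 (n+1) + u2k) - a (u1 n + u2k) (u1 n + u2k))
          + a (u1 (n+1) - u1 n) (u1 (n+1) - u1 n) := by
      simp only [map_add, map_sub, LinearMap.add_apply, LinearMap.sub_apply]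
      linear_combination hsymm (u1 n) (u1 (n+1)) + hsymm u2k (u1 (n+1)) + hsymm (u1 n) u2k
    calc (m:ℝ) * ‖u1 (n+1) - u1 n‖^2 + ⟪u2k - u2km1, u1 (n+1) - u1 n⟫
        = -ΔT * a (u1 (n+1) + u2k) (u1 (n+1) - u1 n) := e1
      _ = -ΔT/2 * (a (u1 (n+1) + u2k) (u1 (n+1) - u1 n) * 2) := by ring
      _ = _ := by rw [ha]
  have hsum := Finset.sum_congr rfl key1
  rw [Finset.sum_add_distrib, ← Finset.mul_sum, ← inner_sum, Finset.sum_range_sub u1,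
    ← Finset.mul_sum, Finset.sum_add_distrib,
    Finset.sum_range_sub (fun n => a (u1 n + u2k) (u1 n + u2k))] at hsum
  -- Cauchy-Schwarz for sums (a-seminorm and inner-product norm)
  have hcs_a := aux_sumCS a hsymm hpsd (fun n => u1 (n+1) - u1 n) m
  rw [Finset.sum_range_sub u1] at hcs_a
  have hcs_i := aux_sumCS (innerₗ V)
    (fun u v => by rw [innerₗ_apply_apply, innerₗ_apply_apply]; exact real_inner_comm v u)
    (fun v => by rw [innerₗ_apply_apply]; exact real_inner_self_nonneg)
    (fun n => u1 (n+1) - u1 n) m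
  simp only [innerₗ_apply_apply] at hcs_i
  rw [Finset.sum_range_sub u1] at hcs_i
  simp only [real_inner_self_eq_norm_sq] at hcs_i
  -- coarse-step equation
  have e2 := heq2 (u2kp1 - u2k) (sub_mem h2c h2b)
  rw [inner_add_left, real_inner_self_eq_norm_sq] at e2
  have e2a : a ((1 - ω) • u1 0 + ω • u1 m + u2k) (u2kp1 - u2k) * 2
      = (a (u1 m + u2kp1) (u1 m + u2kp1) - a (u1 m + u2k) (u1 m + u2k)
          - a (u2kp1 - u2k) (u2kp1 - u2k))
        - 2*(1-ω) * a (u1 m - u1 0) (u2kp1 - u2k) := by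
    simp only [map_add, map_sub, map_smul, LinearMap.add_apply, LinearMap.sub_apply,
      LinearMap.smul_apply, smul_eq_mul]
    linear_combination hsymm (u1 m) u2kp1 + hsymm u2k (u1 m) + hsymm u2k u2kp1
  have S4 : 2*‖u2kp1 - u2k‖^2 + 2*⟪u1 0 - u1m1, u2kp1 - u2k⟫
      + ΔT*(a (u1 m + u2kp1) (u1 m + u2kp1) - a (u1 m + u2k) (u1 m + u2k)
          - a (u2kp1 - u2k) (u2kp1 - u2k))
      - 2*ΔT*(1-ω)*a (u1 m - u1 0) (u2kp1 - u2k) = 0 := by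
    linear_combination 2*e2 + (-ΔT) * e2a
  -- Young inequality for the a-form
  have hyoung : 0 ≤ a (u1 m - u1 0) (u1 m - u1 0)
      - 2*((m:ℝ)*(1-ω))*a (u1 m - u1 0) (u2kp1 - u2k)
      + ((m:ℝ)*(1-ω))^2 * a (u2kp1 - u2k) (u2kp1 - u2k) := by
    have h := hpsd ((u1 m - u1 0) - ((m:ℝ)*(1-ω)) • (u2kp1 - u2k))
    have hexp : a ((u1 m - u1 0) - ((m:ℝ)*(1-ω)) • (u2kp1 - u2k))
        ((u1 m - u1 0) - ((m:ℝ)*(1-ω)) • (u2kp1 - u2k))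
        = a (u1 m - u1 0) (u1 m - u1 0)
          - 2*((m:ℝ)*(1-ω))*a (u1 m - u1 0) (u2kp1 - u2k)
          + ((m:ℝ)*(1-ω))^2 * a (u2kp1 - u2k) (u2kp1 - u2k) := by
      simp only [map_sub, map_smul, LinearMap.sub_apply, LinearMap.smul_apply, smul_eq_mul]
      linear_combination ((m:ℝ)*(1-ω)) * (hsymm (u1 m) u2kp1 - hsymm (u1 m) u2k
        - hsymm (u1 0) u2kp1 + hsymm (u1 0) u2k)
    rw [hexp] at h; exact h
  -- stability bound
  have hD : (0:ℝ) < (m:ℝ) - (m:ℝ)*ω + 1 := by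
    have := mul_nonneg hM0 (by linarith : (0:ℝ) ≤ 1 - ω)
    nlinarith [this]
  have hstab' : ΔT * a (u2kp1 - u2k) (u2kp1 - u2k) * ((m:ℝ) - (m:ℝ)*ω + 1)
      ≤ (1 - γ^2) * ‖u2kp1 - u2k‖^2 := by
    have h := hstab (u2kp1 - u2k) (sub_mem h2c h2b)
    rw [div_mul_eq_mul_div, le_div_iff₀ hD] at h
    linarith
  -- cross terms via strengthened Cauchy-Schwarz
  have hI21 : -(γ * ‖u1 m - u1 0‖ * ‖u2k - u2km1‖) ≤ ⟪u2k - u2km1, u1 m - u1 0⟫ := by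
    have h := hCS (-(u1 m - u1 0)) (neg_mem (sub_mem (hu1 m) (hu1 0)))
      (u2k - u2km1) (sub_mem h2b h2a)
    rw [inner_neg_left, norm_neg, real_inner_comm] at h
    linarith
  have hI12 : -(γ * ‖u2kp1 - u2k‖ * ‖u1 0 - u1m1‖) ≤ ⟪u1 0 - u1m1, u2kp1 - u2k⟫ := by
    have h := hCS (-(u1 0 - u1m1)) (neg_mem (sub_mem (hu1 0) h1m1))
      (u2kp1 - u2k) (sub_mem h2c h2b)
    rw [inner_neg_left, norm_neg] at h
    linarith
  have hx1 : -(γ^2*‖u2k - u2km1‖^2 + ‖u1 m - u1 0‖^2)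
      ≤ 2*⟪u2k - u2km1, u1 m - u1 0⟫ :=
    aux_cross γ ‖u1 m - u1 0‖ ‖u2k - u2km1‖ _ hI21
  have hx2 : -(γ^2*‖u1 0 - u1m1‖^2 + ‖u2kp1 - u2k‖^2)
      ≤ 2*⟪u1 0 - u1m1, u2kp1 - u2k⟫ :=
    aux_cross γ ‖u2kp1 - u2k‖ ‖u1 0 - u1m1‖ _ hI12
  -- rewrite goal norms before abbreviating
  simp only [norm_smul, Real.norm_eq_abs, abs_of_pos (inv_pos.mpr hΔT), mul_pow]
  -- abbreviations
  set A1 := ‖u1 m - u1 0‖^2 with hA1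
  set A2 := ‖u2kp1 - u2k‖^2 with hA2
  set B1 := ‖u1 0 - u1m1‖^2 with hB1
  set B2 := ‖u2k - u2km1‖^2 with hB2
  set E0 := a (u1 0 + u2k) (u1 0 + u2k) with hE0
  set Em := a (u1 m + u2k) (u1 m + u2k) with hEm
  set Ep := a (u1 m + u2kp1) (u1 m + u2kp1) with hEp
  set q1 := a (u1 m - u1 0) (u1 m - u1 0) with hq1
  set q2 := a (u2kp1 - u2k) (u2kp1 - u2k) with hq2
  set c12 := a (u1 m - u1 0) (u2kp1 - u2k) with hc12
  set I21 := ⟪u2k - u2km1, u1 m - u1 0⟫ with hI21d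
  set I12 := ⟪u1 0 - u1m1, u2kp1 - u2k⟫ with hI12d
  set Sq := ∑ n ∈ Finset.range m, ‖u1 (n+1) - u1 n‖^2 with hSq
  set Qd := ∑ n ∈ Finset.range m, a (u1 (n+1) - u1 n) (u1 (n+1) - u1 n) with hQd
  clear_value A1 A2 B1 B2 E0 Em Ep q1 q2 c12 I21 I12 Sq Qd
  -- step S3
  have S1b : 2*(m:ℝ)*((m:ℝ)*Sq + I21) = 2*(m:ℝ)*(-ΔT/2*((Em - E0) + Qd)) := by
    rw [hsum]
  have hint1 : (2*(m:ℝ))*A1 ≤ (2*(m:ℝ))*((m:ℝ)*Sq) :=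
    mul_le_mul_of_nonneg_left hcs_i (by positivity)
  have hint2 : ΔT*q1 ≤ ΔT*((m:ℝ)*Qd) :=
    mul_le_mul_of_nonneg_left hcs_a hΔT.le
  have hA : 2*(m:ℝ)*A1 + 2*(m:ℝ)*I21 + (m:ℝ)*ΔT*(Em - E0) + ΔT*q1 ≤ 0 := by
    linarith [S1b, hint1, hint2]
  -- S4 times m
  have S4m : 2*(m:ℝ)*A2 + 2*(m:ℝ)*I12 + (m:ℝ)*ΔT*(Ep - Em - q2)
      - 2*(m:ℝ)*ΔT*(1-ω)*c12 = 0 := by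
    linear_combination (m:ℝ) * S4
  -- Young times ΔT
  have hyoungT : 0 ≤ ΔT*q1 - 2*ΔT*((m:ℝ)*(1-ω))*c12 + ΔT*((m:ℝ)*(1-ω))^2*q2 := by
    linarith [mul_le_mul_of_nonneg_left hyoung hΔT.le]
  -- S7
  have S7 : 2*(m:ℝ)*(A1 + A2) + 2*(m:ℝ)*(I21 + I12) + (m:ℝ)*ΔT*(Ep - E0)
      ≤ (m:ℝ)*ΔT*q2 + (m:ℝ)^2*(1-ω)^2*ΔT*q2 := by
    linarith [hA, S4m, hyoungT]
  -- S8
  have hq2nn : 0 ≤ q2 := by rw [hq2]; exact hpsd _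
  have hcoef : 1 + (m:ℝ)*(1-ω)^2 ≤ (m:ℝ) - (m:ℝ)*ω + 1 := by
    have h := mul_nonneg hM0 (mul_nonneg hω0 (by linarith : (0:ℝ) ≤ 1 - ω))
    linarith [h]
  have S8 : (m:ℝ)*ΔT*q2 + (m:ℝ)^2*(1-ω)^2*ΔT*q2 ≤ (m:ℝ)*(1-γ^2)*A2 := by
    have h1 : ΔT*q2*(1 + (m:ℝ)*(1-ω)^2) ≤ ΔT*q2*((m:ℝ) - (m:ℝ)*ω + 1) :=
      mul_le_mul_of_nonneg_left hcoef (by positivity)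
    have h2 : ΔT*q2*((m:ℝ) - (m:ℝ)*ω + 1) ≤ (1 - γ^2)*A2 := hstab'
    have h3 := mul_le_mul_of_nonneg_left (h1.trans h2) hM0
    linarith [h3]
  -- KEY inequality
  have hA1nn : 0 ≤ A1 := by rw [hA1]; positivity
  have hg2 : (0:ℝ) ≤ 1 - γ^2 := by
    have h9 : γ^2 ≤ 1 := pow_le_one₀ hγ0 hγ1.le
    linarith [h9]
  have hMA1 : 0 ≤ (m:ℝ)*((1 - γ^2)*A1) := mul_nonneg hM0 (mul_nonneg hg2 hA1nn)
  have hMx1 := mul_le_mul_of_nonneg_left hx1 hM0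
  have hMx2 := mul_le_mul_of_nonneg_left hx2 hM0
  have KEYm : (m:ℝ)*(γ^2*(A1 + A2) + ΔT*Ep) ≤ (m:ℝ)*(γ^2*(B1 + B2) + ΔT*E0) := by
    linarith [S7, S8, hMx1, hMx2, hMA1]
  have KEY : γ^2*(A1 + A2) + ΔT*Ep ≤ γ^2*(B1 + B2) + ΔT*E0 :=
    le_of_mul_le_mul_left KEYm hMpos
  -- conclude
  have hne : ΔT ≠ 0 := hΔT.ne'
  calc γ^2*ΔT/2*((ΔT⁻¹)^2*A1 + (ΔT⁻¹)^2*A2) + 1/2*Ep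
      = ΔT⁻¹/2 * (γ^2*(A1 + A2) + ΔT*Ep) := by field_simp
    _ ≤ ΔT⁻¹/2 * (γ^2*(B1 + B2) + ΔT*E0) :=
        mul_le_mul_of_nonneg_left KEY (by positivity)
    _ = γ^2*ΔT/2*((ΔT⁻¹)^2*B1 + (ΔT⁻¹)^2*B2) + 1/2*E0 := by field_simp
end

section
/- Let m ≥ 1 be an integer and let w^{n_k}, w^{n_k+1}, ..., w^{n_{k+1}} (with n_{k+1} = n_k + m) be elements of an inner product space, and let p be a fixed vector with (p, w) ≤ γ‖p‖‖w‖ for all differences w of the w-sequence, γ < 1. Then Σ_{n=n_k}^{n_{k+1}−1} (m(w^{n+1} − w^n) + p, w^{n+1} − w^n) ≥ (m/2) Σ_{n=n_k}^{n_{k+1}−1} ‖w^{n+1} − w^n‖² − (γ²/2)‖p‖², provided ‖w^{n_{k+1}} − w^{n_k}‖² ≤ m Σ_{n=n_k}^{n_{k+1}−1} ‖w^{n+1} − w^n‖². -/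
open RealInnerProductSpace

/-- Key inequality in the proof of Lemma 1: `p` plays the role of
`u1^{n_k} − u1^{n_{k−1}}` and the `w^n` are the `V2`-components at fine steps
(relabelled so that `n_k = 0` and `n_{k+1} = m`). -/
theorem stmt9 {V : Type*} [NormedAddCommGroup V] [InnerProductSpace ℝ V]
    (m : ℕ) (hm : 1 ≤ m) (w : ℕ → V) (p : V) (γ : ℝ) (hγ : γ < 1)
    (hCS : ∀ i j, ⟪p, w j - w i⟫ ≤ γ * ‖p‖ * ‖w j - w i‖)
    (hdisc : ‖w m - w 0‖ ^ 2 ≤ (m : ℝ) * ∑ n ∈ Finset.range m, ‖w (n + 1) - w n‖ ^ 2) :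
    (m : ℝ) / 2 * ∑ n ∈ Finset.range m, ‖w (n + 1) - w n‖ ^ 2 - γ ^ 2 / 2 * ‖p‖ ^ 2
      ≤ ∑ n ∈ Finset.range m, ⟪(m : ℝ) • (w (n + 1) - w n) + p, w (n + 1) - w n⟫ := by
  have key : ∑ n ∈ Finset.range m, ⟪(m : ℝ) • (w (n + 1) - w n) + p, w (n + 1) - w n⟫
      = (m : ℝ) * ∑ n ∈ Finset.range m, ‖w (n + 1) - w n‖ ^ 2 + ⟪p, w m - w 0⟫ := by
    have h : ∀ n, ⟪(m : ℝ) • (w (n + 1) - w n) + p, w (n + 1) - w n⟫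
        = (m : ℝ) * ‖w (n + 1) - w n‖ ^ 2 + ⟪p, w (n + 1) - w n⟫ := by
      intro n
      rw [inner_add_left, real_inner_smul_left, real_inner_self_eq_norm_sq]
    simp_rw [h]
    rw [Finset.sum_add_distrib, ← Finset.mul_sum, ← inner_sum, Finset.sum_range_sub]
  rw [key]
  have h1 : ⟪p, w 0 - w m⟫ ≤ γ * ‖p‖ * ‖w m - w 0‖ := by
    have := hCS m 0
    rwa [norm_sub_rev] at this
  have h3 : ⟪p, w 0 - w m⟫ = -⟪p, w m - w 0⟫ := by
    rw [← inner_neg_right, neg_sub]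
  nlinarith [sq_nonneg (γ * ‖p‖ - ‖w m - w 0‖), hdisc]
end
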